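/- For complex s with Re(s) > 1, ∑_{n=1}^∞ d(n)²/n^s = ζ(s)⁴/ζ(2s). -/

import Mathlib

/-! Both `n ↦ d(n)²` and `d * d * h`, where `h (m²) = μ m` and `h` vanishes off the squares, are
multiplicative, and on a prime power `p ^ k` they agree because
`∑_{i+j=k+2} (i+1)(j+1) - ∑_{i+j=k} (i+1)(j+1) = (k+3)²`. Passing to Dirichlet series, `d * d`
contributes `ζ(s)⁴`, and `h` contributes `∑ μ(m) m^{-2s} = ζ(2s)⁻¹`. -/

open ArithmeticFunction LSeries Finset
open scoped ArithmeticFunction.Moebius ArithmeticFunction.zeta ArithmeticFunction.sigma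
  LSeries.notation

theorem LSeries_eq_tsum_pnat (f : ℕ → ℂ) (s : ℂ) : L f s = ∑' n : ℕ+, f n / (n : ℂ) ^ s := by
  rw [LSeries, ← PNat.coe_injective.tsum_eq fun n hn => ⟨⟨n, Nat.pos_of_ne_zero ?_⟩, rfl⟩]
  · exact tsum_congr fun n => term_of_ne_zero n.ne_zero f s
  · rintro rfl
    exact hn (term_zero f s)

theorem Nat.Prime.isSquare_pow_iff {p k : ℕ} (hp : p.Prime) : IsSquare (p ^ k) ↔ Even k := by
  refine ⟨fun ⟨c, hc⟩ => ⟨c.factorization p, ?_⟩, fun hk => hk.isSquare_pow p⟩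
  have := congrArg (·.factorization p) hc
  simp only [← sq, Nat.factorization_pow, Finsupp.smul_apply, smul_eq_mul,
    hp.factorization_self, mul_one] at this
  rw [this, two_mul]

theorem Nat.Coprime.isSquare_mul_iff {m n : ℕ} (h : m.Coprime n) :
    IsSquare (m * n) ↔ IsSquare m ∧ IsSquare n := by
  refine ⟨fun ⟨c, hc⟩ => ?_, fun ⟨hm, hn⟩ => hm.mul hn⟩
  rw [← sq] at hc
  obtain ⟨a, rfl⟩ := exists_eq_pow_of_mul_eq_pow (Nat.isUnit_iff.mpr h) hc
  obtain ⟨b, rfl⟩ :=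
    exists_eq_pow_of_mul_eq_pow (Nat.isUnit_iff.mpr h.symm) ((mul_comm _ _).trans hc)
  exact ⟨IsSquare.sq a, IsSquare.sq b⟩

theorem Finset.Nat.sum_antidiagonal_add_two_succ_mul_succ (k : ℕ) :
    ∑ x ∈ antidiagonal (k + 2), (x.1 + 1) * (x.2 + 1) =
      ∑ x ∈ antidiagonal k, (x.1 + 1) * (x.2 + 1) + (k + 3) ^ 2 := by
  have shift : ∑ x ∈ antidiagonal k, (x.1 + 2) * (x.2 + 2) =
      ∑ x ∈ antidiagonal k, ((x.1 + 1) * (x.2 + 1) + (k + 3)) :=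
    sum_congr rfl fun x hx => by rw [← mem_antidiagonal.mp hx]; ring
  rw [sum_antidiagonal_succ, sum_antidiagonal_succ', shift, sum_add_distrib, sum_const,
    card_antidiagonal, smul_eq_mul]
  ring

namespace ArithmeticFunction

variable {R : Type*}

theorem mul_apply_prime_pow [Semiring R] (f g : ArithmeticFunction R) {p : ℕ} (hp : p.Prime)
    (k : ℕ) : (f * g) (p ^ k) = ∑ x ∈ antidiagonal k, f (p ^ x.1) * g (p ^ x.2) := by
  rw [mul_apply, Nat.sum_divisorsAntidiagonal (fun a b => f a * g b),
    Nat.sum_divisors_prime_pow hp,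
    Nat.sum_antidiagonal_eq_sum_range_succ (fun i j => f (p ^ i) * g (p ^ j))]
  refine sum_congr rfl fun i hi => ?_
  rw [Nat.pow_div (Nat.lt_succ_iff.mp (mem_range.mp hi)) hp.pos]

theorem sigma_zero_eq_zeta_mul_zeta : σ 0 = ζ * ζ := by
  rw [← zeta_mul_pow_eq_sigma, pow_zero_eq_zeta]

theorem sigma_zero_mul_sigma_zero_apply_prime_pow {p : ℕ} (hp : p.Prime) (k : ℕ) :
    (σ 0 * σ 0) (p ^ k) = ∑ x ∈ antidiagonal k, (x.1 + 1) * (x.2 + 1) := by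
  simp [mul_apply_prime_pow _ _ hp, sigma_zero_apply_prime_pow hp]

def onSquares [Zero R] (f : ArithmeticFunction R) : ArithmeticFunction R :=
  ⟨fun n => if IsSquare n then f n.sqrt else 0, by simp⟩

theorem onSquares_apply_mul_self [Zero R] (f : ArithmeticFunction R) (m : ℕ) :
    f.onSquares (m * m) = f m := by
  simp [onSquares, Nat.sqrt_eq]

theorem onSquares_apply_sq [Zero R] (f : ArithmeticFunction R) (m : ℕ) :
    f.onSquares (m ^ 2) = f m := by
  rw [sq, onSquares_apply_mul_self]

theorem onSquares_apply_of_not_isSquare [Zero R] (f : ArithmeticFunction R) {n : ℕ}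
    (hn : ¬IsSquare n) : f.onSquares n = 0 := by
  simp [onSquares, hn]

theorem IsMultiplicative.onSquares [MonoidWithZero R] {f : ArithmeticFunction R}
    (hf : f.IsMultiplicative) : f.onSquares.IsMultiplicative := by
  refine ⟨by simpa using (f.onSquares_apply_mul_self 1).trans hf.map_one, fun {m n} hmn => ?_⟩
  by_cases hsq : IsSquare (m * n)
  · obtain ⟨⟨a, rfl⟩, ⟨b, rfl⟩⟩ := hmn.isSquare_mul_iff.mp hsq
    have hab : a.Coprime b :=
      (hmn.coprime_dvd_left (dvd_mul_right a a)).coprime_dvd_right (dvd_mul_right b b)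
    rw [mul_mul_mul_comm, onSquares_apply_mul_self, onSquares_apply_mul_self,
      onSquares_apply_mul_self, hf.map_mul_of_coprime hab]
  · rw [onSquares_apply_of_not_isSquare _ hsq]
    rcases not_and_or.mp (hsq ∘ hmn.isSquare_mul_iff.mpr) with hm | hn
    · rw [onSquares_apply_of_not_isSquare _ hm, zero_mul]
    · rw [onSquares_apply_of_not_isSquare _ hn, mul_zero]

theorem moebius_onSquares_apply_prime_pow [Ring R] {p : ℕ} (hp : p.Prime) (k : ℕ) :
    (μ : ArithmeticFunction R).onSquares (p ^ k) =
      (if k = 0 then 1 else 0) - (if k = 2 then 1 else 0) := by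
  rcases Nat.even_or_odd' k with ⟨i, rfl | rfl⟩
  · rw [pow_mul', onSquares_apply_sq, intCoe_apply]
    rcases Nat.lt_or_ge i 2 with hi | hi
    · interval_cases i <;> simp [moebius_apply_prime hp]
    · rw [moebius_apply_prime_pow hp (by omega)]
      simp [show i ≠ 1 by omega, show 2 * i ≠ 0 by omega, show 2 * i ≠ 2 by omega]
  · rw [onSquares_apply_of_not_isSquare _ (by simp [hp.isSquare_pow_iff])]
    simp [show 2 * i + 1 ≠ 2 by omega]

theorem mul_moebius_onSquares_apply_prime_pow [CommRing R] (f : ArithmeticFunction R) {p : ℕ}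
    (hp : p.Prime) (k : ℕ) :
    (f * (μ : ArithmeticFunction R).onSquares) (p ^ k) =
      f (p ^ k) - if 2 ≤ k then f (p ^ (k - 2)) else 0 := by
  rw [mul_comm, mul_apply_prime_pow _ _ hp, Nat.sum_antidiagonal_eq_sum_range_succ
    (fun i j => (μ : ArithmeticFunction R).onSquares (p ^ i) * f (p ^ j))]
  simp [moebius_onSquares_apply_prime_pow hp, sub_mul, sum_sub_distrib]

theorem natCoe_sigma_zero_ppow_two_eq_mul [CommRing R] :
    (((σ 0).ppow 2 : ArithmeticFunction ℕ) : ArithmeticFunction R) =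
      ((σ 0 * σ 0 : ArithmeticFunction ℕ) : ArithmeticFunction R) *
        (μ : ArithmeticFunction R).onSquares := by
  refine (IsMultiplicative.eq_iff_eq_on_prime_powers _ (isMultiplicative_sigma.ppow.natCast) _
    ((isMultiplicative_sigma.mul isMultiplicative_sigma).natCast.mul
      isMultiplicative_moebius.intCast.onSquares)).mpr fun p k hp => ?_
  simp only [mul_moebius_onSquares_apply_prime_pow _ hp, natCoe_apply, ppow_apply two_pos,
    sigma_zero_apply_prime_pow hp, sigma_zero_mul_sigma_zero_apply_prime_pow hp]
  match k with
  | 0 => simp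
  | 1 => simp [Nat.sum_antidiagonal_succ]
  | m + 2 =>
    rw [Nat.sum_antidiagonal_add_two_succ_mul_succ, if_pos (by omega), Nat.add_sub_cancel]
    push_cast
    ring

theorem term_onSquares_sq (f : ArithmeticFunction ℂ) (s : ℂ) (m : ℕ) :
    term ⇑f.onSquares s (m ^ 2) = term ⇑f (2 * s) m := by
  rcases eq_or_ne m 0 with rfl | hm
  · simp
  · rw [term_of_ne_zero (pow_ne_zero 2 hm), term_of_ne_zero hm, onSquares_apply_sq,
      Nat.cast_pow, ← Complex.natCast_cpow_natCast_mul, Nat.cast_ofNat]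

theorem term_onSquares_of_notMem_range (f : ArithmeticFunction ℂ) (s : ℂ) {n : ℕ}
    (hn : n ∉ Set.range (· ^ 2 : ℕ → ℕ)) : term ⇑f.onSquares s n = 0 := by
  have hsq : ¬IsSquare n := fun ⟨r, hr⟩ => hn ⟨r, hr ▸ sq r⟩
  rw [term_def, onSquares_apply_of_not_isSquare f hsq, zero_div, ite_self]

theorem LSeriesHasSum_onSquares_iff {f : ArithmeticFunction ℂ} {s a : ℂ} :
    LSeriesHasSum ⇑f.onSquares s a ↔ LSeriesHasSum ⇑f (2 * s) a := by
  rw [LSeriesHasSum, LSeriesHasSum,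
    ← (Nat.pow_left_injective two_ne_zero).hasSum_iff fun n hn =>
      term_onSquares_of_notMem_range f s hn]
  simp only [Function.comp_def, term_onSquares_sq]

theorem LSeriesHasSum_moebius_onSquares {s : ℂ} (hs : 1 < s.re) :
    LSeriesHasSum ⇑(μ : ArithmeticFunction ℂ).onSquares s (riemannZeta (2 * s))⁻¹ := by
  have h2s : 1 < (2 * s).re := by simp; linarith
  have hL : L ↗μ (2 * s) = (riemannZeta (2 * s))⁻¹ := by
    rw [← LSeries_zeta_eq_riemannZeta h2s]
    exact eq_inv_of_mul_eq_one_right (LSeries_zeta_mul_Lseries_moebius h2s)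
  exact LSeriesHasSum_onSquares_iff.mpr (hL ▸ (LSeriesSummable_moebius_iff.mpr h2s).LSeriesHasSum)

theorem LSeriesHasSum_sigma_zero {s : ℂ} (hs : 1 < s.re) :
    LSeriesHasSum ⇑(σ 0 : ArithmeticFunction ℂ) s (riemannZeta s ^ 2) := by
  rw [sigma_zero_eq_zeta_mul_zeta, natCoe_mul, sq]
  exact LSeriesHasSum_mul (LSeriesHasSum_zeta hs) (LSeriesHasSum_zeta hs)

end ArithmeticFunction

theorem dirichlet_series_divisor_squared (s : ℂ) (hs : 1 < s.re) :
    ∑' n : ℕ+, ((Nat.divisors (n : ℕ)).card : ℂ) ^ 2 / (n : ℂ) ^ s =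
      riemannZeta s ^ 4 / riemannZeta (2 * s) := by
  have hσ := LSeriesHasSum_sigma_zero hs
  have hL : LSeriesHasSum ⇑(((σ 0).ppow 2 : ArithmeticFunction ℕ) : ArithmeticFunction ℂ) s
      (riemannZeta s ^ 4 / riemannZeta (2 * s)) := by
    rw [natCoe_sigma_zero_ppow_two_eq_mul, natCoe_mul, div_eq_mul_inv,
      show 4 = 2 + 2 from rfl, pow_add]
    exact LSeriesHasSum_mul (LSeriesHasSum_mul hσ hσ) (LSeriesHasSum_moebius_onSquares hs)
  rw [← hL.LSeries_eq, LSeries_eq_tsum_pnat]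
  simp [sigma_zero_apply]
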